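/- Let G and G' be vertex-disjoint connection graphs such that Π_G and Π_{G'} are separated pure distributed places, and suppose either both have no input transitions (•Π_G = •Π_{G'} = ∅) or both have no output transitions (Π_G• = Π_{G'}• = ∅). Then Π_{G ⊎ G'} = Π_G ∪ Π_{G'} (as a disjoint union) and this is a pure distributed place. -/

import Mathlib

open Set

structure Net (P T : Type) where
  pre : T → Set P
  post : T → Set P
  minit : Set P

variable {P T : Type}

def fireable (N : Net P T) (t : T) (M : Set P) : Prop := N.pre t ⊆ M

def fire (N : Net P T) (t : T) (M : Set P) : Set P := (M \ N.pre t) ∪ N.post t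

def valid (N : Net P T) : Set P → List T → Prop
  | _, [] => True
  | M, t :: σ => fireable N t M ∧ valid N (fire N t M) σ

def runFrom (N : Net P T) (M : Set P) (σ : List T) : Set P :=
  σ.foldl (fun M t => fire N t M) M

def isFiringSeq (N : Net P T) (σ : List T) : Prop := valid N N.minit σ

def reachable (N : Net P T) (M : Set P) : Prop :=
  ∃ σ, isFiringSeq N σ ∧ runFrom N N.minit σ = M

def safe (N : Net P T) : Prop :=
  ∀ M, reachable N M → ∀ t, fireable N t M → (N.post t \ N.pre t) ∩ M = ∅

/-- transitions inserting tokens into some place of `Q` (the set `•Q`). -/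
def preQ (N : Net P T) (Q : Set P) : Set T := {t | (N.post t ∩ Q).Nonempty}

/-- transitions removing tokens from some place of `Q` (the set `Q•`). -/
def postQ (N : Net P T) (Q : Set P) : Set T := {t | (N.pre t ∩ Q).Nonempty}

def adjQ (N : Net P T) (Q : Set P) : Set T := preQ N Q ∪ postQ N Q

def insQ (N : Net P T) (Q : Set P) : Set T := preQ N Q \ postQ N Q

def remQ (N : Net P T) (Q : Set P) : Set T := postQ N Q \ preQ N Q

def readQ (N : Net P T) (Q : Set P) : Set T :=
  {t ∈ adjQ N Q | N.pre t ∩ Q = N.post t ∩ Q}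

def enablesQ (N : Net P T) (Q : Set P) : Set (T × T) :=
  {tu | (Q ∩ (N.post tu.1 \ N.pre tu.1) ∩ N.pre tu.2).Nonempty}

def disablesQ (N : Net P T) (Q : Set P) : Set (T × T) :=
  {tu | (Q ∩ (N.pre tu.1 \ N.post tu.1) ∩ N.pre tu.2).Nonempty}

def postList (N : Net P T) (l : List T) : Set P := ⋃ t ∈ l, N.post t

def epreList (N : Net P T) (l : List T) : Set P := ⋃ t ∈ l, (N.pre t \ N.post t)

def isInSeq (N : Net P T) (Q : Set P) (σ : List T) : Prop :=
  σ ≠ [] ∧ (∀ t ∈ σ, t ∈ insQ N Q ∪ readQ N Q) ∧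
  (∀ t ∈ σ.head?, t ∈ insQ N Q) ∧
  ∀ i (h : i < σ.length), 0 < i →
    Q ∩ N.pre (σ.get ⟨i, h⟩) ⊆ postList N (σ.take i) ∧
    Q ∩ (N.post (σ.get ⟨i, h⟩) \ N.pre (σ.get ⟨i, h⟩)) ∩ postList N (σ.take i) = ∅

def isCInSeq (N : Net P T) (Q : Set P) (σ : List T) : Prop :=
  isInSeq N Q σ ∧ Q ⊆ postList N σ

def isOutSeq (N : Net P T) (Q : Set P) (σ : List T) : Prop :=
  σ ≠ [] ∧ (∀ t ∈ σ, t ∈ remQ N Q ∪ readQ N Q) ∧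
  (∀ t ∈ σ.head?, t ∈ remQ N Q) ∧
  ∀ i (h : i < σ.length), 0 < i →
    Q ∩ N.pre (σ.get ⟨i, h⟩) ⊆ Q \ epreList N (σ.take i)

def isCOutSeq (N : Net P T) (Q : Set P) (σ : List T) : Prop :=
  isOutSeq N Q σ ∧ Q ⊆ epreList N σ

def distPlace (N : Net P T) (Q : Set P) : Prop :=
  Q.Nonempty ∧
  adjQ N Q = insQ N Q ∪ remQ N Q ∪ readQ N Q ∧
  (∀ t ∈ insQ N Q, ∀ u ∈ remQ N Q, (t, u) ∈ enablesQ N Q) ∧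
  (∀ σ, isInSeq N Q σ → ∃ τ, σ <+: τ ∧ isCInSeq N Q τ) ∧
  (∀ σ, isOutSeq N Q σ → ∃ τ, σ <+: τ ∧ isCOutSeq N Q τ)

def pureDP (N : Net P T) (Q : Set P) : Prop := postQ N Q ∩ preQ N Q = ∅

def separated (N : Net P T) (Q R : Set P) : Prop := adjQ N Q ∩ adjQ N R = ∅

/-- tagged transitions `t^in` / `t^out` identifying places -/
inductive Tag (T : Type) where
  | inp : T → Tag T
  | out : T → Tag T

/-- the net whose places are identified with their sets of tagged adjacent
transitions: `(t, π_Z) ∈ Fl` iff `t^in ∈ Z` and `(π_Z, t) ∈ Fl` iff `t^out ∈ Z`. -/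
def tagNet (T : Type) : Net (Set (Tag T)) T where
  pre t := {Z | Tag.out t ∈ Z}
  post t := {Z | Tag.inp t ∈ Z}
  minit := ∅

/-- cross-product of sets of tagged places -/
def cross {T : Type} (Q R : Set (Set (Tag T))) : Set (Set (Tag T)) :=
  {W | ∃ Z ∈ Q, ∃ Z' ∈ R, W = Z ∪ Z'}

/-- a connection graph: an undirected graph on a set of tagged transitions -/
structure CGraph (T : Type) where
  verts : Set (Tag T)
  graph : SimpleGraph (Tag T)
  support : ∀ x y, graph.Adj x y → x ∈ verts ∧ y ∈ verts

/-- maximal cliques of a connection graph (within its vertex set) -/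
def cgMaxClique {T : Type} (Γ : CGraph T) (C : Set (Tag T)) : Prop :=
  C.Nonempty ∧ C ⊆ Γ.verts ∧ Γ.graph.IsClique C ∧
    ∀ D, D ⊆ Γ.verts → Γ.graph.IsClique D → C ⊆ D → D = C

/-- the places generated by a connection graph: `Π_Γ = {π_C | C a max-clique of Γ}` -/
def cgPlaces {T : Type} (Γ : CGraph T) : Set (Set (Tag T)) :=
  {C | cgMaxClique Γ C}

/-- disjoint union of connection graphs -/
def cgUnion {T : Type} (Γ Γ' : CGraph T) : CGraph T where
  verts := Γ.verts ∪ Γ'.verts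
  graph :=
    { Adj := fun x y => Γ.graph.Adj x y ∨ Γ'.graph.Adj x y
      symm := ⟨fun _ _ h => h.elim (fun h => Or.inl h.symm) (fun h => Or.inr h.symm)⟩
      loopless := ⟨fun x h => h.elim (Γ.graph.loopless.irrefl x) (Γ'.graph.loopless.irrefl x)⟩ }
  support := fun x y h => h.elim
    (fun h => ⟨Or.inl (Γ.support x y h).1, Or.inl (Γ.support x y h).2⟩)
    (fun h => ⟨Or.inr (Γ'.support x y h).1, Or.inr (Γ'.support x y h).2⟩)

/-- join of connection graphs: disjoint union plus all edges between vertex sets -/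
def cgJoin {T : Type} (Γ Γ' : CGraph T) : CGraph T where
  verts := Γ.verts ∪ Γ'.verts
  graph :=
    { Adj := fun x y => Γ.graph.Adj x y ∨ Γ'.graph.Adj x y ∨
        (x ≠ y ∧ ((x ∈ Γ.verts ∧ y ∈ Γ'.verts) ∨ (x ∈ Γ'.verts ∧ y ∈ Γ.verts)))
      symm := by
        constructor
        rintro x y (h | h | ⟨hne, h⟩)
        · exact Or.inl h.symm
        · exact Or.inr (Or.inl h.symm)
        · exact Or.inr (Or.inr ⟨hne.symm,
            h.elim (fun hh => Or.inr ⟨hh.2, hh.1⟩) (fun hh => Or.inl ⟨hh.2, hh.1⟩)⟩)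
      loopless := by
        constructor
        rintro x (h | h | ⟨hne, _⟩)
        · exact Γ.graph.loopless.irrefl x h
        · exact Γ'.graph.loopless.irrefl x h
        · exact hne rfl }
  support := by
    rintro x y (h | h | ⟨_, h | h⟩)
    · exact ⟨Or.inl (Γ.support x y h).1, Or.inl (Γ.support x y h).2⟩
    · exact ⟨Or.inr (Γ'.support x y h).1, Or.inr (Γ'.support x y h).2⟩
    · exact ⟨Or.inl h.1, Or.inr h.2⟩
    · exact ⟨Or.inr h.1, Or.inl h.2⟩

-- ########## auxiliary lemmas ##########

lemma mem_preQ {N : Net P T} {Q : Set P} {t : T} : t ∈ preQ N Q ↔ (N.post t ∩ Q).Nonempty := Iff.rfl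
lemma mem_postQ {N : Net P T} {Q : Set P} {t : T} : t ∈ postQ N Q ↔ (N.pre t ∩ Q).Nonempty := Iff.rfl

lemma post_empty_of_preQ {N : Net P T} {Q : Set P} (h : preQ N Q = ∅) (t : T) :
    N.post t ∩ Q = ∅ := by
  rw [← Set.not_nonempty_iff_eq_empty]
  intro hn
  have ht : t ∈ preQ N Q := hn
  rw [h] at ht
  exact ht

lemma pre_empty_of_postQ {N : Net P T} {Q : Set P} (h : postQ N Q = ∅) (t : T) :
    N.pre t ∩ Q = ∅ := by
  rw [← Set.not_nonempty_iff_eq_empty]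
  intro hn
  have ht : t ∈ postQ N Q := hn
  rw [h] at ht
  exact ht

lemma preQ_union (N : Net P T) (A B : Set P) : preQ N (A ∪ B) = preQ N A ∪ preQ N B := by
  ext t
  simp [preQ, Set.inter_union_distrib_left, Set.union_nonempty]

lemma postQ_union (N : Net P T) (A B : Set P) : postQ N (A ∪ B) = postQ N A ∪ postQ N B := by
  ext t
  simp [postQ, Set.inter_union_distrib_left, Set.union_nonempty]

lemma mem_epreList {N : Net P T} {l : List T} {x : P} :
    x ∈ epreList N l ↔ ∃ t ∈ l, x ∈ N.pre t \ N.post t := by simp [epreList]; tauto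

lemma mem_postList {N : Net P T} {l : List T} {x : P} :
    x ∈ postList N l ↔ ∃ t ∈ l, x ∈ N.post t := by simp [postList]

lemma epreList_subset {N : Net P T} {l l' : List T} (h : ∀ t ∈ l, t ∈ l') :
    epreList N l ⊆ epreList N l' := by
  intro x hx
  rw [mem_epreList] at *
  obtain ⟨t, ht, hxt⟩ := hx
  exact ⟨t, h t ht, hxt⟩

lemma postList_subset {N : Net P T} {l l' : List T} (h : ∀ t ∈ l, t ∈ l') :
    postList N l ⊆ postList N l' := by
  intro x hx
  rw [mem_postList] at *
  obtain ⟨t, ht, hxt⟩ := hx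
  exact ⟨t, h t ht, hxt⟩

lemma mem_take_iff {α : Type} {l : List α} {j : ℕ} {t : α} :
    t ∈ l.take j ↔ ∃ i, ∃ h : i < l.length, i < j ∧ l.get ⟨i, h⟩ = t := by
  constructor
  · intro ht
    obtain ⟨n, hn, hget⟩ := List.mem_iff_getElem.1 ht
    have hlen : n < l.length := by
      have := hn; rw [List.length_take] at this; omega
    refine ⟨n, hlen, ?_, ?_⟩
    · have := hn; rw [List.length_take] at this; omega
    · simpa [List.get_eq_getElem, List.getElem_take] using hget
  · rintro ⟨i, h, hij, rfl⟩
    exact List.mem_iff_getElem.2 ⟨i, by rw [List.length_take]; omega, by simp [List.getElem_take]⟩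

def outRel (N : Net P T) (Q : Set P) : T → T → Prop :=
  fun t u => Q ∩ N.pre u ∩ (N.pre t \ N.post t) = ∅

def inRel (N : Net P T) (Q : Set P) : T → T → Prop :=
  fun t u => Q ∩ N.post u ∩ N.post t = ∅

lemma outSeq_iff {N : Net P T} {Q : Set P} {σ : List T} :
    isOutSeq N Q σ ↔ σ ≠ [] ∧ (∀ t ∈ σ, t ∈ remQ N Q ∪ readQ N Q) ∧
      (∀ t ∈ σ.head?, t ∈ remQ N Q) ∧ σ.Pairwise (outRel N Q) := by
  unfold isOutSeq
  refine and_congr_right fun _ => and_congr_right fun _ => and_congr_right fun _ => ?_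
  rw [List.pairwise_iff_get]
  constructor
  · intro h i j hij
    rw [outRel, Set.eq_empty_iff_forall_notMem]
    rintro x ⟨⟨hxQ, hxpre⟩, hxe⟩
    have h0 : 0 < (j : ℕ) := lt_of_le_of_lt (Nat.zero_le _) hij
    have hsub := h j j.isLt h0 ⟨hxQ, hxpre⟩
    refine hsub.2 ?_
    rw [mem_epreList]
    exact ⟨σ.get i, mem_take_iff.2 ⟨i, i.isLt, hij, rfl⟩, hxe⟩
  · intro h i hi h0
    rintro x ⟨hxQ, hxpre⟩
    refine ⟨hxQ, fun hmem => ?_⟩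
    rw [mem_epreList] at hmem
    obtain ⟨t, ht, hx⟩ := hmem
    obtain ⟨k, hk, hki, rfl⟩ := mem_take_iff.1 ht
    have hp := h ⟨k, hk⟩ ⟨i, hi⟩ hki
    rw [outRel, Set.eq_empty_iff_forall_notMem] at hp
    exact hp x ⟨⟨hxQ, hxpre⟩, hx⟩

lemma inSeq_iff {N : Net P T} {Q : Set P} (hQ : ∀ t, N.pre t ∩ Q = ∅) {σ : List T} :
    isInSeq N Q σ ↔ σ ≠ [] ∧ (∀ t ∈ σ, t ∈ insQ N Q ∪ readQ N Q) ∧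
      (∀ t ∈ σ.head?, t ∈ insQ N Q) ∧ σ.Pairwise (inRel N Q) := by
  unfold isInSeq
  refine and_congr_right fun _ => and_congr_right fun _ => and_congr_right fun _ => ?_
  rw [List.pairwise_iff_get]
  constructor
  · intro h i j hij
    rw [inRel, Set.eq_empty_iff_forall_notMem]
    rintro x ⟨⟨hxQ, hxpost⟩, hxi⟩
    have h0 : 0 < (j : ℕ) := lt_of_le_of_lt (Nat.zero_le _) hij
    have hd := (h j j.isLt h0).2
    rw [Set.eq_empty_iff_forall_notMem] at hd
    refine hd x ⟨⟨hxQ, hxpost, ?_⟩, ?_⟩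
    · intro hxp
      have := hQ (σ.get j)
      rw [Set.eq_empty_iff_forall_notMem] at this
      exact this x ⟨hxp, hxQ⟩
    · rw [mem_postList]
      exact ⟨σ.get i, mem_take_iff.2 ⟨i, i.isLt, hij, rfl⟩, hxi⟩
  · intro h i hi h0
    constructor
    · rintro x ⟨hxQ, hxpre⟩
      exfalso
      have := hQ (σ.get ⟨i, hi⟩)
      rw [Set.eq_empty_iff_forall_notMem] at this
      exact this x ⟨hxpre, hxQ⟩
    · rw [Set.eq_empty_iff_forall_notMem]
      rintro x ⟨⟨hxQ, hxpost, _⟩, hxl⟩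
      rw [mem_postList] at hxl
      obtain ⟨t, ht, hx⟩ := hxl
      obtain ⟨k, hk, hki, rfl⟩ := mem_take_iff.1 ht
      have hp := h ⟨k, hk⟩ ⟨i, hi⟩ hki
      rw [inRel, Set.eq_empty_iff_forall_notMem] at hp
      exact hp x ⟨⟨hxQ, hxpost⟩, hx⟩

lemma pairwise_of_filter {α : Type} (R : α → α → Prop) (p : α → Bool) :
    ∀ l : List α, (∀ t ∈ l, p t = false → ∀ u, R t u ∧ R u t) →
      (l.filter p).Pairwise R → l.Pairwise R := by
  intro l
  induction l with
  | nil => intro _ _; exact List.Pairwise.nil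
  | cons a l ih =>
    intro hB h
    by_cases hp : p a = true
    · rw [List.filter_cons_of_pos hp] at h
      rcases List.pairwise_cons.1 h with ⟨h1, h2⟩
      refine List.pairwise_cons.2 ⟨?_, ih (fun t ht => hB t (List.mem_cons_of_mem a ht)) h2⟩
      intro u hu
      by_cases hpu : p u = true
      · exact h1 u (List.mem_filter.2 ⟨hu, hpu⟩)
      · exact (hB u (List.mem_cons_of_mem a hu) (by simpa using hpu) a).2
    · rw [List.filter_cons_of_neg (by simpa using hp)] at h
      refine List.pairwise_cons.2 ⟨?_, ih (fun t ht => hB t (List.mem_cons_of_mem a ht)) h⟩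
      intro u hu
      exact (hB a List.mem_cons_self (by simpa using hp) u).1

lemma remQ_of_preQ_empty {N : Net P T} {Q : Set P} (h : preQ N Q = ∅) :
    remQ N Q = postQ N Q := by simp [remQ, h]

lemma insQ_of_postQ_empty {N : Net P T} {Q : Set P} (h : postQ N Q = ∅) :
    insQ N Q = preQ N Q := by simp [insQ, h]

lemma readQ_of_preQ_empty {N : Net P T} {Q : Set P} (h : preQ N Q = ∅) :
    readQ N Q = ∅ := by
  ext t
  simp only [readQ, Set.mem_setOf_eq, Set.mem_empty_iff_false, iff_false, not_and]
  intro hadj heq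
  have hpost : N.post t ∩ Q = ∅ := post_empty_of_preQ h t
  have hadj' : (N.pre t ∩ Q).Nonempty := by
    rcases hadj with h1 | h1
    · rw [h] at h1; exact h1.elim
    · exact h1
  rw [heq, hpost] at hadj'
  exact Set.not_nonempty_empty hadj'

lemma readQ_of_postQ_empty {N : Net P T} {Q : Set P} (h : postQ N Q = ∅) :
    readQ N Q = ∅ := by
  ext t
  simp only [readQ, Set.mem_setOf_eq, Set.mem_empty_iff_false, iff_false, not_and]
  intro hadj heq
  have hpre : N.pre t ∩ Q = ∅ := pre_empty_of_postQ h t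
  have hadj' : (N.post t ∩ Q).Nonempty := by
    rcases hadj with h1 | h1
    · exact h1
    · rw [h] at h1; exact h1.elim
  rw [← heq, hpre] at hadj'
  exact Set.not_nonempty_empty hadj'

lemma out_combine (N : Net P T) (A B : Set P)
    (hA4 : ∀ σ, isOutSeq N A σ → ∃ τ, σ <+: τ ∧ isCOutSeq N A τ)
    (hB4 : ∀ σ, isOutSeq N B σ → ∃ τ, σ <+: τ ∧ isCOutSeq N B τ)
    (hpA : preQ N A = ∅) (hpB : preQ N B = ∅)
    (hd : postQ N A ∩ postQ N B = ∅)
    (htA : (postQ N A).Nonempty) (htB : (postQ N B).Nonempty) :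
    ∀ σ, isOutSeq N (A ∪ B) σ → ∃ τ, σ <+: τ ∧ isCOutSeq N (A ∪ B) τ := by
  classical
  have hpQ : preQ N (A ∪ B) = ∅ := by rw [preQ_union, hpA, hpB]; simp
  -- elements not in postQ N A are universal for outRel N A (and symmetrically)
  have hpreBA : ∀ t ∈ postQ N B, N.pre t ∩ A = ∅ := by
    intro t ht
    rw [← Set.not_nonempty_iff_eq_empty]
    intro hn
    have : t ∈ postQ N A ∩ postQ N B := ⟨hn, ht⟩
    rw [hd] at this; exact this
  have hpreAB : ∀ t ∈ postQ N A, N.pre t ∩ B = ∅ := by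
    intro t ht
    rw [← Set.not_nonempty_iff_eq_empty]
    intro hn
    have : t ∈ postQ N A ∩ postQ N B := ⟨ht, hn⟩
    rw [hd] at this; exact this
  have hunivA : ∀ t ∈ postQ N B, ∀ u, outRel N A t u ∧ outRel N A u t := by
    intro t ht u
    have he := hpreBA t ht
    constructor
    · rw [outRel, Set.eq_empty_iff_forall_notMem]
      rintro x ⟨⟨hxA, _⟩, hxp, _⟩
      rw [Set.eq_empty_iff_forall_notMem] at he
      exact he x ⟨hxp, hxA⟩
    · rw [outRel, Set.eq_empty_iff_forall_notMem]
      rintro x ⟨⟨hxA, hxp⟩, _⟩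
      rw [Set.eq_empty_iff_forall_notMem] at he
      exact he x ⟨hxp, hxA⟩
  have hunivB : ∀ t ∈ postQ N A, ∀ u, outRel N B t u ∧ outRel N B u t := by
    intro t ht u
    have he := hpreAB t ht
    constructor
    · rw [outRel, Set.eq_empty_iff_forall_notMem]
      rintro x ⟨⟨hxB, _⟩, hxp, _⟩
      rw [Set.eq_empty_iff_forall_notMem] at he
      exact he x ⟨hxp, hxB⟩
    · rw [outRel, Set.eq_empty_iff_forall_notMem]
      rintro x ⟨⟨hxB, hxp⟩, _⟩
      rw [Set.eq_empty_iff_forall_notMem] at he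
      exact he x ⟨hxp, hxB⟩
  have hcomb : ∀ t u, outRel N A t u → outRel N B t u → outRel N (A ∪ B) t u := by
    intro t u h1 h2
    rw [outRel]
    have : (A ∪ B) ∩ N.pre u ∩ (N.pre t \ N.post t) =
        (A ∩ N.pre u ∩ (N.pre t \ N.post t)) ∪ (B ∩ N.pre u ∩ (N.pre t \ N.post t)) := by
      rw [Set.union_inter_distrib_right, Set.union_inter_distrib_right]
    rw [this, h1, h2, Set.union_empty]
  intro σ hσ
  rw [outSeq_iff] at hσ
  obtain ⟨hne, hmem, hhead, hpair⟩ := hσ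
  have hmem' : ∀ t ∈ σ, t ∈ postQ N A ∪ postQ N B := by
    intro t ht
    rcases hmem t ht with h1 | h1
    · rw [remQ_of_preQ_empty hpQ, postQ_union] at h1; exact h1
    · rw [readQ_of_preQ_empty hpQ] at h1; exact h1.elim
  set pA : T → Bool := fun t => decide (t ∈ postQ N A) with hpAdef
  set pB : T → Bool := fun t => decide (t ∈ postQ N B) with hpBdef
  have houtA : ∀ t ∈ σ.filter pA, t ∈ postQ N A := by
    intro t ht
    have := (List.mem_filter.1 ht).2
    simpa [hpAdef] using this
  have houtB : ∀ t ∈ σ.filter pB, t ∈ postQ N B := by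
    intro t ht
    have := (List.mem_filter.1 ht).2
    simpa [hpBdef] using this
  have hpairA : σ.Pairwise (outRel N A) := by
    refine hpair.imp ?_
    intro t u h
    rw [outRel, ← Set.subset_empty_iff, ← h]
    exact Set.inter_subset_inter (Set.inter_subset_inter Set.subset_union_left subset_rfl) subset_rfl
  have hpairB : σ.Pairwise (outRel N B) := by
    refine hpair.imp ?_
    intro t u h
    rw [outRel, ← Set.subset_empty_iff, ← h]
    exact Set.inter_subset_inter (Set.inter_subset_inter Set.subset_union_right subset_rfl) subset_rfl
  -- completed sequence for A
  obtain ⟨τA, hprefA, hcA⟩ : ∃ τA, (σ.filter pA) <+: τA ∧ isCOutSeq N A τA := by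
    by_cases hA0 : σ.filter pA = []
    · obtain ⟨tA, htA'⟩ := htA
      obtain ⟨τA, _, hc⟩ := hA4 [tA] (by
        rw [outSeq_iff]
        refine ⟨by simp, ?_, ?_, by simp⟩
        · intro t ht
          simp only [List.mem_singleton] at ht
          subst ht
          exact Or.inl (by rw [remQ_of_preQ_empty hpA]; exact htA')
        · intro t ht
          simp only [List.head?_cons, Option.mem_some_iff] at ht
          subst ht
          rw [remQ_of_preQ_empty hpA]; exact htA')
      exact ⟨τA, hA0 ▸ τA.nil_prefix, hc⟩
    · refine hA4 _ (by
        rw [outSeq_iff]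
        refine ⟨hA0, ?_, ?_, hpairA.sublist List.filter_sublist⟩
        · intro t ht
          exact Or.inl (by rw [remQ_of_preQ_empty hpA]; exact houtA t ht)
        · intro t ht
          exact (by rw [remQ_of_preQ_empty hpA]; exact houtA t (List.mem_of_mem_head? ht)))
  obtain ⟨τB, hprefB, hcB⟩ : ∃ τB, (σ.filter pB) <+: τB ∧ isCOutSeq N B τB := by
    by_cases hB0 : σ.filter pB = []
    · obtain ⟨tB, htB'⟩ := htB
      obtain ⟨τB, _, hc⟩ := hB4 [tB] (by
        rw [outSeq_iff]
        refine ⟨by simp, ?_, ?_, by simp⟩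
        · intro t ht
          simp only [List.mem_singleton] at ht
          subst ht
          exact Or.inl (by rw [remQ_of_preQ_empty hpB]; exact htB')
        · intro t ht
          simp only [List.head?_cons, Option.mem_some_iff] at ht
          subst ht
          rw [remQ_of_preQ_empty hpB]; exact htB')
      exact ⟨τB, hB0 ▸ τB.nil_prefix, hc⟩
    · refine hB4 _ (by
        rw [outSeq_iff]
        refine ⟨hB0, ?_, ?_, hpairB.sublist List.filter_sublist⟩
        · intro t ht
          exact Or.inl (by rw [remQ_of_preQ_empty hpB]; exact houtB t ht)
        · intro t ht
          exact (by rw [remQ_of_preQ_empty hpB]; exact houtB t (List.mem_of_mem_head? ht)))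
  obtain ⟨ρA, rfl⟩ := hprefA
  obtain ⟨ρB, rfl⟩ := hprefB
  obtain ⟨hcA1, hcA2⟩ := hcA
  obtain ⟨hcB1, hcB2⟩ := hcB
  rw [outSeq_iff] at hcA1 hcB1
  have hρA : ∀ t ∈ ρA, t ∈ postQ N A := by
    intro t ht
    rcases hcA1.2.1 t (List.mem_append_right _ ht) with h1 | h1
    · rw [remQ_of_preQ_empty hpA] at h1; exact h1
    · rw [readQ_of_preQ_empty hpA] at h1; exact h1.elim
  have hρB : ∀ t ∈ ρB, t ∈ postQ N B := by
    intro t ht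
    rcases hcB1.2.1 t (List.mem_append_right _ ht) with h1 | h1
    · rw [remQ_of_preQ_empty hpB] at h1; exact h1
    · rw [readQ_of_preQ_empty hpB] at h1; exact h1.elim
  refine ⟨σ ++ (ρA ++ ρB), List.prefix_append σ _, ?_, ?_⟩
  · rw [outSeq_iff]
    have hmemτ : ∀ t ∈ σ ++ (ρA ++ ρB), t ∈ postQ N A ∪ postQ N B := by
      intro t ht
      rcases List.mem_append.1 ht with h1 | h1
      · exact hmem' t h1
      · rcases List.mem_append.1 h1 with h2 | h2
        · exact Or.inl (hρA t h2)
        · exact Or.inr (hρB t h2)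
    have hmemτ' : ∀ t ∈ σ ++ (ρA ++ ρB), t ∈ remQ N (A ∪ B) := by
      intro t ht
      rw [remQ_of_preQ_empty hpQ, postQ_union]
      exact hmemτ t ht
    refine ⟨by simp [hne], fun t ht => Or.inl (hmemτ' t ht), fun t ht => hmemτ' t (List.mem_of_mem_head? ht), ?_⟩
    have hfA : (σ ++ (ρA ++ ρB)).filter pA = σ.filter pA ++ ρA := by
      rw [List.filter_append, List.filter_append]
      have h1 : ρA.filter pA = ρA := List.filter_eq_self.2 (fun t ht => by
        simp [hpAdef, hρA t ht])
      have h2 : ρB.filter pA = [] := List.filter_eq_nil_iff.2 (fun t ht => by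
        simp only [hpAdef, decide_eq_true_eq]
        intro hc
        have : t ∈ postQ N A ∩ postQ N B := ⟨hc, hρB t ht⟩
        rw [hd] at this; exact this)
      rw [h1, h2, List.append_nil]
    have hfB : (σ ++ (ρA ++ ρB)).filter pB = σ.filter pB ++ ρB := by
      rw [List.filter_append, List.filter_append]
      have h1 : ρB.filter pB = ρB := List.filter_eq_self.2 (fun t ht => by
        simp [hpBdef, hρB t ht])
      have h2 : ρA.filter pB = [] := List.filter_eq_nil_iff.2 (fun t ht => by
        simp only [hpBdef, decide_eq_true_eq]
        intro hc
        have : t ∈ postQ N A ∩ postQ N B := ⟨hρA t ht, hc⟩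
        rw [hd] at this; exact this)
      rw [h1, h2, List.nil_append]
    have hPA : (σ ++ (ρA ++ ρB)).Pairwise (outRel N A) := by
      refine pairwise_of_filter _ pA _ ?_ ?_
      · intro t ht hfalse
        rcases hmemτ t ht with h1 | h1
        · exfalso; simp [hpAdef, h1] at hfalse
        · exact hunivA t h1
      · rw [hfA]; exact hcA1.2.2.2
    have hPB : (σ ++ (ρA ++ ρB)).Pairwise (outRel N B) := by
      refine pairwise_of_filter _ pB _ ?_ ?_
      · intro t ht hfalse
        rcases hmemτ t ht with h1 | h1
        · exact hunivB t h1
        · exfalso; simp [hpBdef, h1] at hfalse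
      · rw [hfB]; exact hcB1.2.2.2
    exact (hPA.and hPB).imp (fun h => hcomb _ _ h.1 h.2)
  · intro x hx
    rcases hx with hx | hx
    · refine epreList_subset ?_ (hcA2 hx)
      intro t ht
      rcases List.mem_append.1 ht with h1 | h1
      · exact List.mem_append_left _ (List.mem_of_mem_filter h1)
      · exact List.mem_append_right _ (List.mem_append_left _ h1)
    · refine epreList_subset ?_ (hcB2 hx)
      intro t ht
      rcases List.mem_append.1 ht with h1 | h1
      · exact List.mem_append_left _ (List.mem_of_mem_filter h1)
      · exact List.mem_append_right _ (List.mem_append_right _ h1)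

lemma in_combine (N : Net P T) (A B : Set P)
    (hA4 : ∀ σ, isInSeq N A σ → ∃ τ, σ <+: τ ∧ isCInSeq N A τ)
    (hB4 : ∀ σ, isInSeq N B σ → ∃ τ, σ <+: τ ∧ isCInSeq N B τ)
    (hpA : postQ N A = ∅) (hpB : postQ N B = ∅)
    (hd : preQ N A ∩ preQ N B = ∅)
    (htA : (preQ N A).Nonempty) (htB : (preQ N B).Nonempty) :
    ∀ σ, isInSeq N (A ∪ B) σ → ∃ τ, σ <+: τ ∧ isCInSeq N (A ∪ B) τ := by
  classical
  have hpQ : postQ N (A ∪ B) = ∅ := by rw [postQ_union, hpA, hpB]; simp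
  have hQu : ∀ t, N.pre t ∩ (A ∪ B) = ∅ := pre_empty_of_postQ hpQ
  have hQA : ∀ t, N.pre t ∩ A = ∅ := pre_empty_of_postQ hpA
  have hQB : ∀ t, N.pre t ∩ B = ∅ := pre_empty_of_postQ hpB
  have hpostBA : ∀ t ∈ preQ N B, N.post t ∩ A = ∅ := by
    intro t ht
    rw [← Set.not_nonempty_iff_eq_empty]
    intro hn
    have : t ∈ preQ N A ∩ preQ N B := ⟨hn, ht⟩
    rw [hd] at this; exact this
  have hpostAB : ∀ t ∈ preQ N A, N.post t ∩ B = ∅ := by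
    intro t ht
    rw [← Set.not_nonempty_iff_eq_empty]
    intro hn
    have : t ∈ preQ N A ∩ preQ N B := ⟨ht, hn⟩
    rw [hd] at this; exact this
  have hunivA : ∀ t ∈ preQ N B, ∀ u, inRel N A t u ∧ inRel N A u t := by
    intro t ht u
    have he := hpostBA t ht
    rw [Set.eq_empty_iff_forall_notMem] at he
    constructor
    · rw [inRel, Set.eq_empty_iff_forall_notMem]
      rintro x ⟨⟨hxA, _⟩, hxp⟩
      exact he x ⟨hxp, hxA⟩
    · rw [inRel, Set.eq_empty_iff_forall_notMem]
      rintro x ⟨⟨hxA, hxp⟩, _⟩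
      exact he x ⟨hxp, hxA⟩
  have hunivB : ∀ t ∈ preQ N A, ∀ u, inRel N B t u ∧ inRel N B u t := by
    intro t ht u
    have he := hpostAB t ht
    rw [Set.eq_empty_iff_forall_notMem] at he
    constructor
    · rw [inRel, Set.eq_empty_iff_forall_notMem]
      rintro x ⟨⟨hxB, _⟩, hxp⟩
      exact he x ⟨hxp, hxB⟩
    · rw [inRel, Set.eq_empty_iff_forall_notMem]
      rintro x ⟨⟨hxB, hxp⟩, _⟩
      exact he x ⟨hxp, hxB⟩
  have hcomb : ∀ t u, inRel N A t u → inRel N B t u → inRel N (A ∪ B) t u := by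
    intro t u h1 h2
    rw [inRel]
    have : (A ∪ B) ∩ N.post u ∩ N.post t =
        (A ∩ N.post u ∩ N.post t) ∪ (B ∩ N.post u ∩ N.post t) := by
      rw [Set.union_inter_distrib_right, Set.union_inter_distrib_right]
    rw [this, h1, h2, Set.union_empty]
  intro σ hσ
  rw [inSeq_iff hQu] at hσ
  obtain ⟨hne, hmem, hhead, hpair⟩ := hσ
  have hmem' : ∀ t ∈ σ, t ∈ preQ N A ∪ preQ N B := by
    intro t ht
    rcases hmem t ht with h1 | h1
    · rw [insQ_of_postQ_empty hpQ, preQ_union] at h1; exact h1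
    · rw [readQ_of_postQ_empty hpQ] at h1; exact h1.elim
  set pA : T → Bool := fun t => decide (t ∈ preQ N A) with hpAdef
  set pB : T → Bool := fun t => decide (t ∈ preQ N B) with hpBdef
  have houtA : ∀ t ∈ σ.filter pA, t ∈ preQ N A := by
    intro t ht
    have := (List.mem_filter.1 ht).2
    simpa [hpAdef] using this
  have houtB : ∀ t ∈ σ.filter pB, t ∈ preQ N B := by
    intro t ht
    have := (List.mem_filter.1 ht).2
    simpa [hpBdef] using this
  have hpairA : σ.Pairwise (inRel N A) := by
    refine hpair.imp ?_
    intro t u h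
    rw [inRel, ← Set.subset_empty_iff, ← h]
    exact Set.inter_subset_inter (Set.inter_subset_inter Set.subset_union_left subset_rfl) subset_rfl
  have hpairB : σ.Pairwise (inRel N B) := by
    refine hpair.imp ?_
    intro t u h
    rw [inRel, ← Set.subset_empty_iff, ← h]
    exact Set.inter_subset_inter (Set.inter_subset_inter Set.subset_union_right subset_rfl) subset_rfl
  obtain ⟨τA, hprefA, hcA⟩ : ∃ τA, (σ.filter pA) <+: τA ∧ isCInSeq N A τA := by
    by_cases hA0 : σ.filter pA = []
    · obtain ⟨tA, htA'⟩ := htA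
      obtain ⟨τA, _, hc⟩ := hA4 [tA] (by
        rw [inSeq_iff hQA]
        refine ⟨by simp, ?_, ?_, by simp⟩
        · intro t ht
          simp only [List.mem_singleton] at ht
          subst ht
          exact Or.inl (by rw [insQ_of_postQ_empty hpA]; exact htA')
        · intro t ht
          simp only [List.head?_cons, Option.mem_some_iff] at ht
          subst ht
          rw [insQ_of_postQ_empty hpA]; exact htA')
      exact ⟨τA, hA0 ▸ τA.nil_prefix, hc⟩
    · refine hA4 _ (by
        rw [inSeq_iff hQA]
        refine ⟨hA0, ?_, ?_, hpairA.sublist List.filter_sublist⟩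
        · intro t ht
          exact Or.inl (by rw [insQ_of_postQ_empty hpA]; exact houtA t ht)
        · intro t ht
          exact (by rw [insQ_of_postQ_empty hpA]; exact houtA t (List.mem_of_mem_head? ht)))
  obtain ⟨τB, hprefB, hcB⟩ : ∃ τB, (σ.filter pB) <+: τB ∧ isCInSeq N B τB := by
    by_cases hB0 : σ.filter pB = []
    · obtain ⟨tB, htB'⟩ := htB
      obtain ⟨τB, _, hc⟩ := hB4 [tB] (by
        rw [inSeq_iff hQB]
        refine ⟨by simp, ?_, ?_, by simp⟩
        · intro t ht
          simp only [List.mem_singleton] at ht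
          subst ht
          exact Or.inl (by rw [insQ_of_postQ_empty hpB]; exact htB')
        · intro t ht
          simp only [List.head?_cons, Option.mem_some_iff] at ht
          subst ht
          rw [insQ_of_postQ_empty hpB]; exact htB')
      exact ⟨τB, hB0 ▸ τB.nil_prefix, hc⟩
    · refine hB4 _ (by
        rw [inSeq_iff hQB]
        refine ⟨hB0, ?_, ?_, hpairB.sublist List.filter_sublist⟩
        · intro t ht
          exact Or.inl (by rw [insQ_of_postQ_empty hpB]; exact houtB t ht)
        · intro t ht
          exact (by rw [insQ_of_postQ_empty hpB]; exact houtB t (List.mem_of_mem_head? ht)))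
  obtain ⟨ρA, rfl⟩ := hprefA
  obtain ⟨ρB, rfl⟩ := hprefB
  obtain ⟨hcA1, hcA2⟩ := hcA
  obtain ⟨hcB1, hcB2⟩ := hcB
  rw [inSeq_iff hQA] at hcA1
  rw [inSeq_iff hQB] at hcB1
  have hρA : ∀ t ∈ ρA, t ∈ preQ N A := by
    intro t ht
    rcases hcA1.2.1 t (List.mem_append_right _ ht) with h1 | h1
    · rw [insQ_of_postQ_empty hpA] at h1; exact h1
    · rw [readQ_of_postQ_empty hpA] at h1; exact h1.elim
  have hρB : ∀ t ∈ ρB, t ∈ preQ N B := by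
    intro t ht
    rcases hcB1.2.1 t (List.mem_append_right _ ht) with h1 | h1
    · rw [insQ_of_postQ_empty hpB] at h1; exact h1
    · rw [readQ_of_postQ_empty hpB] at h1; exact h1.elim
  refine ⟨σ ++ (ρA ++ ρB), List.prefix_append σ _, ?_, ?_⟩
  · rw [inSeq_iff hQu]
    have hmemτ : ∀ t ∈ σ ++ (ρA ++ ρB), t ∈ preQ N A ∪ preQ N B := by
      intro t ht
      rcases List.mem_append.1 ht with h1 | h1
      · exact hmem' t h1
      · rcases List.mem_append.1 h1 with h2 | h2
        · exact Or.inl (hρA t h2)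
        · exact Or.inr (hρB t h2)
    have hmemτ' : ∀ t ∈ σ ++ (ρA ++ ρB), t ∈ insQ N (A ∪ B) := by
      intro t ht
      rw [insQ_of_postQ_empty hpQ, preQ_union]
      exact hmemτ t ht
    refine ⟨by simp [hne], fun t ht => Or.inl (hmemτ' t ht), fun t ht => hmemτ' t (List.mem_of_mem_head? ht), ?_⟩
    have hfA : (σ ++ (ρA ++ ρB)).filter pA = σ.filter pA ++ ρA := by
      rw [List.filter_append, List.filter_append]
      have h1 : ρA.filter pA = ρA := List.filter_eq_self.2 (fun t ht => by
        simp [hpAdef, hρA t ht])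
      have h2 : ρB.filter pA = [] := List.filter_eq_nil_iff.2 (fun t ht => by
        simp only [hpAdef, decide_eq_true_eq]
        intro hc
        have : t ∈ preQ N A ∩ preQ N B := ⟨hc, hρB t ht⟩
        rw [hd] at this; exact this)
      rw [h1, h2, List.append_nil]
    have hfB : (σ ++ (ρA ++ ρB)).filter pB = σ.filter pB ++ ρB := by
      rw [List.filter_append, List.filter_append]
      have h1 : ρB.filter pB = ρB := List.filter_eq_self.2 (fun t ht => by
        simp [hpBdef, hρB t ht])
      have h2 : ρA.filter pB = [] := List.filter_eq_nil_iff.2 (fun t ht => by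
        simp only [hpBdef, decide_eq_true_eq]
        intro hc
        have : t ∈ preQ N A ∩ preQ N B := ⟨hρA t ht, hc⟩
        rw [hd] at this; exact this)
      rw [h1, h2, List.nil_append]
    have hPA : (σ ++ (ρA ++ ρB)).Pairwise (inRel N A) := by
      refine pairwise_of_filter _ pA _ ?_ ?_
      · intro t ht hfalse
        rcases hmemτ t ht with h1 | h1
        · exfalso; simp [hpAdef, h1] at hfalse
        · exact hunivA t h1
      · rw [hfA]; exact hcA1.2.2.2
    have hPB : (σ ++ (ρA ++ ρB)).Pairwise (inRel N B) := by
      refine pairwise_of_filter _ pB _ ?_ ?_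
      · intro t ht hfalse
        rcases hmemτ t ht with h1 | h1
        · exact hunivB t h1
        · exfalso; simp [hpBdef, h1] at hfalse
      · rw [hfB]; exact hcB1.2.2.2
    exact (hPA.and hPB).imp (fun h => hcomb _ _ h.1 h.2)
  · intro x hx
    rcases hx with hx | hx
    · refine postList_subset ?_ (hcA2 hx)
      intro t ht
      rcases List.mem_append.1 ht with h1 | h1
      · exact List.mem_append_left _ (List.mem_of_mem_filter h1)
      · exact List.mem_append_right _ (List.mem_append_left _ h1)
    · refine postList_subset ?_ (hcB2 hx)
      intro t ht
      rcases List.mem_append.1 ht with h1 | h1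
      · exact List.mem_append_left _ (List.mem_of_mem_filter h1)
      · exact List.mem_append_right _ (List.mem_append_right _ h1)

lemma clique_union_of_left {Γ Γ' : CGraph T} {C : Set (Tag T)} (h : Γ.graph.IsClique C) :
    (cgUnion Γ Γ').graph.IsClique C :=
  fun _ hx _ hy hxy => Or.inl (h hx hy hxy)

lemma clique_union_of_right {Γ Γ' : CGraph T} {C : Set (Tag T)} (h : Γ'.graph.IsClique C) :
    (cgUnion Γ Γ').graph.IsClique C :=
  fun _ hx _ hy hxy => Or.inr (h hx hy hxy)

lemma union_clique_cases {Γ Γ' : CGraph T} (hdisj : Disjoint Γ.verts Γ'.verts)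
    {C : Set (Tag T)} (hC : C.Nonempty) (hsub : C ⊆ Γ.verts ∪ Γ'.verts)
    (hcl : (cgUnion Γ Γ').graph.IsClique C) :
    C ⊆ Γ.verts ∨ C ⊆ Γ'.verts := by
  obtain ⟨x, hx⟩ := hC
  rcases hsub hx with hx1 | hx1
  · left
    intro y hy
    by_cases hxy : x = y
    · exact hxy ▸ hx1
    · rcases hcl hx hy hxy with h | h
      · exact (Γ.support x y h).2
      · exact absurd hx1 (fun hh => Set.disjoint_left.1 hdisj hh ((Γ'.support x y h).1))
  · right
    intro y hy
    by_cases hxy : x = y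
    · exact hxy ▸ hx1
    · rcases hcl hx hy hxy with h | h
      · exact absurd ((Γ.support x y h).1) (fun hh => Set.disjoint_left.1 hdisj hh hx1)
      · exact (Γ'.support x y h).2

lemma clique_of_union_left {Γ Γ' : CGraph T} (hdisj : Disjoint Γ.verts Γ'.verts)
    {C : Set (Tag T)} (hsub : C ⊆ Γ.verts) (h : (cgUnion Γ Γ').graph.IsClique C) :
    Γ.graph.IsClique C := by
  intro x hx y hy hxy
  rcases h hx hy hxy with h1 | h1
  · exact h1
  · exact absurd (hsub hx) (fun hh => Set.disjoint_left.1 hdisj hh ((Γ'.support x y h1).1))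

lemma clique_of_union_right {Γ Γ' : CGraph T} (hdisj : Disjoint Γ.verts Γ'.verts)
    {C : Set (Tag T)} (hsub : C ⊆ Γ'.verts) (h : (cgUnion Γ Γ').graph.IsClique C) :
    Γ'.graph.IsClique C := by
  intro x hx y hy hxy
  rcases h hx hy hxy with h1 | h1
  · exact absurd ((Γ.support x y h1).1) (fun hh => Set.disjoint_left.1 hdisj hh (hsub hx))
  · exact h1

lemma exists_postQ_cg {Δ : CGraph T} (hne : (cgPlaces Δ).Nonempty)
    (h : preQ (tagNet T) (cgPlaces Δ) = ∅) : (postQ (tagNet T) (cgPlaces Δ)).Nonempty := by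
  obtain ⟨C, hC⟩ := hne
  obtain ⟨x, hx⟩ := hC.1
  cases x with
  | inp t =>
    exfalso
    have ht : t ∈ preQ (tagNet T) (cgPlaces Δ) := ⟨C, hx, hC⟩
    rw [h] at ht
    exact ht
  | out t => exact ⟨t, C, hx, hC⟩

lemma exists_preQ_cg {Δ : CGraph T} (hne : (cgPlaces Δ).Nonempty)
    (h : postQ (tagNet T) (cgPlaces Δ) = ∅) : (preQ (tagNet T) (cgPlaces Δ)).Nonempty := by
  obtain ⟨C, hC⟩ := hne
  obtain ⟨x, hx⟩ := hC.1
  cases x with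
  | out t =>
    exfalso
    have ht : t ∈ postQ (tagNet T) (cgPlaces Δ) := ⟨C, hx, hC⟩
    rw [h] at ht
    exact ht
  | inp t => exact ⟨t, C, hx, hC⟩

/-- if the place sets generated by two vertex-disjoint connection graphs
are separated pure distributed places and either both have no input transitions or
both have no output transitions, then the places generated by the disjoint union of
the graphs are the disjoint union of the generated place sets, and form a pure
distributed place. -/
theorem stmt16 (T : Type) (Γ Γ' : CGraph T)
    (hdisj : Disjoint Γ.verts Γ'.verts)
    (hA : distPlace (tagNet T) (cgPlaces Γ))
    (hB : distPlace (tagNet T) (cgPlaces Γ'))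
    (hpA : pureDP (tagNet T) (cgPlaces Γ))
    (hpB : pureDP (tagNet T) (cgPlaces Γ'))
    (hsep : separated (tagNet T) (cgPlaces Γ) (cgPlaces Γ'))
    (hio : (preQ (tagNet T) (cgPlaces Γ) = ∅ ∧ preQ (tagNet T) (cgPlaces Γ') = ∅) ∨
           (postQ (tagNet T) (cgPlaces Γ) = ∅ ∧ postQ (tagNet T) (cgPlaces Γ') = ∅)) :
    cgPlaces (cgUnion Γ Γ') = cgPlaces Γ ∪ cgPlaces Γ' ∧
    Disjoint (cgPlaces Γ) (cgPlaces Γ') ∧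
    distPlace (tagNet T) (cgPlaces (cgUnion Γ Γ')) ∧
    pureDP (tagNet T) (cgPlaces (cgUnion Γ Γ')) := by
  have hplaces : cgPlaces (cgUnion Γ Γ') = cgPlaces Γ ∪ cgPlaces Γ' := by
    ext C
    constructor
    · rintro ⟨hCne, hCsub, hCcl, hCmax⟩
      rcases union_clique_cases hdisj hCne hCsub hCcl with hs | hs
      · exact Or.inl ⟨hCne, hs, clique_of_union_left hdisj hs hCcl,
          fun D hD1 hD2 hD3 => hCmax D (hD1.trans Set.subset_union_left)
            (clique_union_of_left hD2) hD3⟩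
      · exact Or.inr ⟨hCne, hs, clique_of_union_right hdisj hs hCcl,
          fun D hD1 hD2 hD3 => hCmax D (hD1.trans Set.subset_union_right)
            (clique_union_of_right hD2) hD3⟩
    · rintro (⟨hCne, hCsub, hCcl, hCmax⟩ | ⟨hCne, hCsub, hCcl, hCmax⟩)
      · refine ⟨hCne, hCsub.trans Set.subset_union_left, clique_union_of_left hCcl, ?_⟩
        intro D hD1 hD2 hD3
        rcases union_clique_cases hdisj (hCne.mono hD3) hD1 hD2 with hs | hs
        · exact hCmax D hs (clique_of_union_left hdisj hs hD2) hD3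
        · exfalso
          obtain ⟨x, hx⟩ := hCne
          exact Set.disjoint_left.1 hdisj (hCsub hx) (hs (hD3 hx))
      · refine ⟨hCne, hCsub.trans Set.subset_union_right, clique_union_of_right hCcl, ?_⟩
        intro D hD1 hD2 hD3
        rcases union_clique_cases hdisj (hCne.mono hD3) hD1 hD2 with hs | hs
        · exfalso
          obtain ⟨x, hx⟩ := hCne
          exact Set.disjoint_left.1 hdisj (hs (hD3 hx)) (hCsub hx)
        · exact hCmax D hs (clique_of_union_right hdisj hs hD2) hD3
  have hdisjP : Disjoint (cgPlaces Γ) (cgPlaces Γ') := by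
    rw [Set.disjoint_left]
    intro C h1 h2
    obtain ⟨x, hx⟩ := h1.1
    exact Set.disjoint_left.1 hdisj (h1.2.1 hx) (h2.2.1 hx)
  have hsep' : adjQ (tagNet T) (cgPlaces Γ) ∩ adjQ (tagNet T) (cgPlaces Γ') = ∅ := hsep
  have hdpost : postQ (tagNet T) (cgPlaces Γ) ∩ postQ (tagNet T) (cgPlaces Γ') = ∅ := by
    rw [← Set.subset_empty_iff, ← hsep']
    exact Set.inter_subset_inter Set.subset_union_right Set.subset_union_right
  have hdpre : preQ (tagNet T) (cgPlaces Γ) ∩ preQ (tagNet T) (cgPlaces Γ') = ∅ := by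
    rw [← Set.subset_empty_iff, ← hsep']
    exact Set.inter_subset_inter Set.subset_union_left Set.subset_union_left
  have hQne : (cgPlaces Γ ∪ cgPlaces Γ').Nonempty := by
    obtain ⟨C, hC⟩ := hA.1
    exact ⟨C, Or.inl hC⟩
  have hmain : distPlace (tagNet T) (cgPlaces Γ ∪ cgPlaces Γ') ∧
      pureDP (tagNet T) (cgPlaces Γ ∪ cgPlaces Γ') := by
    rcases hio with ⟨h1, h2⟩ | ⟨h1, h2⟩
    · have hpQ : preQ (tagNet T) (cgPlaces Γ ∪ cgPlaces Γ') = ∅ := by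
        rw [preQ_union, h1, h2]; simp
      refine ⟨⟨hQne, ?_, ?_, ?_, ?_⟩, ?_⟩
      · simp [adjQ, insQ, remQ, hpQ, readQ_of_preQ_empty hpQ]
      · intro t ht
        exfalso
        simp [insQ, hpQ] at ht
      · intro σ hσ
        exfalso
        obtain ⟨hne, -, hhead, -⟩ := hσ
        cases σ with
        | nil => exact hne rfl
        | cons a l =>
          have := hhead a rfl
          simp [insQ, hpQ] at this
      · exact out_combine _ _ _ hA.2.2.2.2 hB.2.2.2.2 h1 h2 hdpost
          (exists_postQ_cg hA.1 h1) (exists_postQ_cg hB.1 h2)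
      · simp [pureDP, hpQ]
    · have hpQ : postQ (tagNet T) (cgPlaces Γ ∪ cgPlaces Γ') = ∅ := by
        rw [postQ_union, h1, h2]; simp
      refine ⟨⟨hQne, ?_, ?_, ?_, ?_⟩, ?_⟩
      · simp [adjQ, insQ, remQ, hpQ, readQ_of_postQ_empty hpQ]
      · intro t ht u hu
        exfalso
        simp [remQ, hpQ] at hu
      · exact in_combine _ _ _ hA.2.2.2.1 hB.2.2.2.1 h1 h2 hdpre
          (exists_preQ_cg hA.1 h1) (exists_preQ_cg hB.1 h2)
      · intro σ hσ
        exfalso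
        obtain ⟨hne, -, hhead, -⟩ := hσ
        cases σ with
        | nil => exact hne rfl
        | cons a l =>
          have := hhead a rfl
          simp [remQ, hpQ] at this
      · simp [pureDP, hpQ]
  exact ⟨hplaces, hdisjP, hplaces ▸ hmain.1, hplaces ▸ hmain.2⟩
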